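/- Let A ∈ ℝ^{m×n}, b ∈ ℝ^m, μ > 0, β ∈ [0,1], and α > 0. Define the elastic net objective g(x) = (1/2)‖Ax − b‖₂² + μ((1−β)/2 ‖x‖₂² + β‖x‖₁) and the ISTA map f(x) = S_{αμβ}(x − α(Aᵀ(Ax − b) + μ(1−β)x)). Then a point x⋆ ∈ ℝⁿ satisfies f(x⋆) = x⋆ if and only if x⋆ is a global minimizer of g. -/

import Mathlib

open Matrix

/-- Interpret a plain vector in `Fin k → ℝ` as a point of Euclidean space. -/
noncomputable def toEuc (k : ℕ) (v : Fin k → ℝ) : EuclideanSpace ℝ (Fin k) :=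
  (WithLp.equiv 2 (Fin k → ℝ)).symm v

/-- Coordinatewise shrinkage (soft-thresholding) operator `S_κ` on `ℝⁿ`:
`S_κ(v)_i = sign(v_i) * max (|v_i| - κ) 0`. -/
noncomputable def shrink (n : ℕ) (κ : ℝ) (v : EuclideanSpace ℝ (Fin n)) :
    EuclideanSpace ℝ (Fin n) :=
  WithLp.toLp 2 (fun i => Real.sign (v i) * max (|v i| - κ) 0)

/-- The elastic net objective
`g(x) = (1/2)‖Ax − b‖₂² + μ((1−β)/2 ‖x‖₂² + β‖x‖₁)`. -/
noncomputable def elasticNet (m n : ℕ) (A : Matrix (Fin m) (Fin n) ℝ)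
    (b : EuclideanSpace ℝ (Fin m)) (μ β : ℝ) (x : EuclideanSpace ℝ (Fin n)) : ℝ :=
  (1 / 2) * ‖toEuc m (A.mulVec x) - b‖ ^ 2 +
    μ * ((1 - β) / 2 * ‖x‖ ^ 2 + β * ∑ i, |x i|)

/-- The ISTA fixed-point map `f(x) = S_{αμβ}(x − α(Aᵀ(Ax − b) + μ(1−β)x))` for elastic
net regression. -/
noncomputable def istaMap (m n : ℕ) (A : Matrix (Fin m) (Fin n) ℝ)
    (b : EuclideanSpace ℝ (Fin m)) (μ β α : ℝ) (x : EuclideanSpace ℝ (Fin n)) :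
    EuclideanSpace ℝ (Fin n) :=
  shrink n (α * μ * β)
    (x - α • (toEuc n (Aᵀ.mulVec (toEuc m (A.mulVec x) - b)) + (μ * (1 - β)) • x))

/-!
Both sides are equivalent to the coordinatewise optimality condition
`0 ≤ c i * (y - x⋆ i) + μβ (|y| - |x⋆ i|)` for all `i` and `y`, i.e. `-c i ∈ μβ ∂|·|(x⋆ i)`, where
`c = Aᵀ(Ax⋆ - b) + μ(1-β)x⋆` is the gradient of the smooth part of `g`.

For the ISTA map this is the proximal characterization of soft-thresholding:
`S_κ(u) = t` iff `u - t ∈ κ ∂|·|(t)`. For the objective, `g(x⋆ + v) = g(x⋆) + L(v) + Q(v)` with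
`L(v) = ⟪c, v⟫ + μβ (‖x⋆ + v‖₁ - ‖x⋆‖₁)` and `Q` a positive semidefinite quadratic form, and
`L ≥ 0` is exactly the coordinatewise condition. Minimality gives `L + Q ≥ 0`; since
`L(εv) ≤ ε L(v)` for `ε ∈ (0, 1]` (convexity, `L 0 = 0`) while `Q(εv) = ε² Q(v)`, dividing by `ε`
and letting `ε → 0` gives `L ≥ 0`.
-/

open Filter Topology

noncomputable def softThreshold (κ u : ℝ) : ℝ := Real.sign u * max (|u| - κ) 0

theorem forall_mul_sub_le_mul_abs_sub_iff {d t κ : ℝ} :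
    (∀ y, d * (y - t) ≤ κ * (|y| - |t|)) ↔ |d| ≤ κ ∧ d * t = κ * |t| := by
  constructor
  · intro h
    have hdt : d * t = κ * |t| := by
      have h0 := h 0
      have h2 := h (2 * t)
      rw [abs_mul, abs_two] at h2
      simp only [abs_zero] at h0
      linarith
    have hy : ∀ y, d * y ≤ κ * |y| := fun y => by linarith [h y]
    exact ⟨abs_le'.2 ⟨by simpa using hy 1, by simpa using hy (-1)⟩, hdt⟩
  · rintro ⟨hd, hdt⟩ y
    have hdy : d * y ≤ κ * |y| := calc
      d * y ≤ |d| * |y| := by rw [← abs_mul]; exact le_abs_self _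
      _ ≤ κ * |y| := mul_le_mul_of_nonneg_right hd (abs_nonneg y)
    linarith

theorem softThreshold_spec {κ : ℝ} (hκ : 0 ≤ κ) (u : ℝ) :
    |u - softThreshold κ u| ≤ κ ∧ (u - softThreshold κ u) * softThreshold κ u =
      κ * |softThreshold κ u| := by
  rcases lt_or_ge κ u with hu | hu
  · have hs : softThreshold κ u = u - κ := by
      rw [softThreshold, Real.sign_of_pos (by linarith), abs_of_pos (by linarith),
        max_eq_left (by linarith), one_mul]
    rw [hs, sub_sub_cancel, abs_of_nonneg hκ, abs_of_pos (by linarith)]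
    exact ⟨le_rfl, rfl⟩
  rcases lt_or_ge u (-κ) with hu' | hu'
  · have hs : softThreshold κ u = u + κ := by
      rw [softThreshold, Real.sign_of_neg (by linarith), abs_of_neg (by linarith),
        max_eq_left (by linarith)]
      ring
    rw [hs, abs_of_neg (by linarith : u + κ < 0), sub_add_cancel_left, abs_neg, abs_of_nonneg hκ]
    exact ⟨le_rfl, by ring⟩
  · have hs : softThreshold κ u = 0 := by
      rw [softThreshold, max_eq_right (by rw [sub_nonpos, abs_le]; exact ⟨hu', hu⟩), mul_zero]
    simpa [hs, abs_le] using ⟨hu', hu⟩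

theorem softThreshold_eq_iff {κ u t : ℝ} (hκ : 0 ≤ κ) :
    softThreshold κ u = t ↔ ∀ y, (u - t) * (y - t) ≤ κ * (|y| - |t|) := by
  constructor
  · rintro rfl
    exact forall_mul_sub_le_mul_abs_sub_iff.2 (softThreshold_spec hκ u)
  · intro ht
    -- adding the two variational inequalities gives `(softThreshold κ u - t) ^ 2 ≤ 0`
    have hs := forall_mul_sub_le_mul_abs_sub_iff.2 (softThreshold_spec hκ u) t
    have := ht (softThreshold κ u)
    nlinarith

theorem nonneg_of_forall_nonneg_add_quadratic {E : Type*} [AddCommGroup E] [Module ℝ E]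
    {L Q : E → ℝ} (hL : ∀ v, ∀ ε : ℝ, 0 < ε → ε ≤ 1 → L (ε • v) ≤ ε * L v)
    (hQ : ∀ (ε : ℝ) v, Q (ε • v) = ε ^ 2 * Q v) (h : ∀ v, 0 ≤ L v + Q v) (v : E) :
    0 ≤ L v := by
  have hsmall : ∀ ε : ℝ, 0 < ε → ε ≤ 1 → 0 ≤ L v + ε * Q v := by
    intro ε hε hε1
    have hεv := h (ε • v)
    rw [hQ] at hεv
    have : 0 ≤ ε * (L v + ε * Q v) := by nlinarith [hL v ε hε hε1]
    exact nonneg_of_mul_nonneg_right this hε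
  have hlim : Tendsto (fun ε : ℝ => L v + ε * Q v) (𝓝[>] 0) (𝓝 (L v)) := by
    have := Continuous.tendsto (f := fun ε : ℝ => L v + ε * Q v) (by fun_prop) 0
    simpa using this.mono_left nhdsWithin_le_nhds
  refine ge_of_tendsto hlim ?_
  filter_upwards [Ioc_mem_nhdsGT one_pos] with ε hε using hsmall ε hε.1 hε.2

theorem inner_toEuc_mulVec {m n : ℕ} (A : Matrix (Fin m) (Fin n) ℝ) (w : EuclideanSpace ℝ (Fin m))
    (v : EuclideanSpace ℝ (Fin n)) :
    inner ℝ w (toEuc m (A *ᵥ v)) = inner ℝ (toEuc n (Aᵀ *ᵥ w)) v := by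
  simp [toEuc, EuclideanSpace.inner_eq_star_dotProduct, Matrix.mulVec_transpose,
    Matrix.dotProduct_mulVec, dotProduct_comm]

section ElasticNet

variable {m n : ℕ} (A : Matrix (Fin m) (Fin n) ℝ) (b : EuclideanSpace ℝ (Fin m)) (μ β : ℝ)

noncomputable def elasticNetGrad (x : EuclideanSpace ℝ (Fin n)) : EuclideanSpace ℝ (Fin n) :=
  toEuc n (Aᵀ.mulVec (toEuc m (A.mulVec x) - b)) + (μ * (1 - β)) • x

noncomputable def elasticNetFirstOrder (x v : EuclideanSpace ℝ (Fin n)) : ℝ :=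
  ∑ i, (elasticNetGrad A b μ β x i * v i + μ * β * (|x i + v i| - |x i|))

noncomputable def elasticNetQuadratic (v : EuclideanSpace ℝ (Fin n)) : ℝ :=
  1 / 2 * ‖toEuc m (A.mulVec v)‖ ^ 2 + μ * (1 - β) / 2 * ‖v‖ ^ 2

theorem elasticNet_add (x v : EuclideanSpace ℝ (Fin n)) :
    elasticNet m n A b μ β (x + v) = elasticNet m n A b μ β x +
      elasticNetFirstOrder A b μ β x v + elasticNetQuadratic A μ β v := by
  have hres : toEuc m (A.mulVec (x + v).ofLp) - b =
      (toEuc m (A.mulVec x) - b) + toEuc m (A.mulVec v) := by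
    ext j
    simp only [toEuc, WithLp.ofLp_add, mulVec_add, WithLp.equiv_symm_apply, WithLp.toLp_add,
      PiLp.sub_apply, PiLp.add_apply]
    ring
  have hfirst : elasticNetFirstOrder A b μ β x v =
      inner ℝ (toEuc m (A.mulVec x) - b) (toEuc m (A.mulVec v)) + μ * (1 - β) * inner ℝ x v +
        μ * β * (∑ i, |(x + v) i| - ∑ i, |x i|) := by
    rw [inner_toEuc_mulVec, ← real_inner_smul_left, ← inner_add_left]
    simp only [elasticNetFirstOrder, elasticNetGrad, PiLp.add_apply, PiLp.smul_apply, smul_eq_mul,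
      mul_comm, Finset.sum_add_distrib, WithLp.ofLp_sub, PiLp.inner_apply, RCLike.inner_apply,
      Real.ringHom_apply, add_right_inj]
    rw [← Finset.sum_sub_distrib, Finset.mul_sum]
  rw [elasticNet, elasticNet, hres, norm_add_sq_real, norm_add_sq_real, hfirst,
    elasticNetQuadratic]
  ring

theorem elasticNetQuadratic_smul (ε : ℝ) (v : EuclideanSpace ℝ (Fin n)) :
    elasticNetQuadratic A μ β (ε • v) = ε ^ 2 * elasticNetQuadratic A μ β v := by
  have hA : toEuc m (A.mulVec (ε • v).ofLp) = ε • toEuc m (A.mulVec v) := by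
    ext j
    simp [toEuc, Matrix.mulVec_smul]
  simp only [elasticNetQuadratic, hA, norm_smul, mul_pow, Real.norm_eq_abs, sq_abs]
  ring

theorem elasticNetQuadratic_nonneg (hμβ : 0 ≤ μ * (1 - β)) (v : EuclideanSpace ℝ (Fin n)) :
    0 ≤ elasticNetQuadratic A μ β v := by
  unfold elasticNetQuadratic
  exact add_nonneg (by positivity) (mul_nonneg (div_nonneg hμβ zero_le_two) (sq_nonneg _))

theorem elasticNetFirstOrder_smul_le (hμβ : 0 ≤ μ * β) (x v : EuclideanSpace ℝ (Fin n)) {ε : ℝ}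
    (hε : 0 < ε) (hε1 : ε ≤ 1) :
    elasticNetFirstOrder A b μ β x (ε • v) ≤ ε * elasticNetFirstOrder A b μ β x v := by
  rw [elasticNetFirstOrder, elasticNetFirstOrder, Finset.mul_sum]
  refine Finset.sum_le_sum fun i _ => ?_
  have hconv : |x i + ε * v i| ≤ (1 - ε) * |x i| + ε * |x i + v i| := by
    calc |x i + ε * v i| = |(1 - ε) * x i + ε * (x i + v i)| := by ring_nf
      _ ≤ |(1 - ε) * x i| + |ε * (x i + v i)| := abs_add_le _ _
      _ = (1 - ε) * |x i| + ε * |x i + v i| := by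
        rw [abs_mul, abs_mul, abs_of_nonneg (by linarith), abs_of_pos hε]
  simp only [PiLp.smul_apply, smul_eq_mul]
  nlinarith [mul_le_mul_of_nonneg_left hconv hμβ]

theorem forall_elasticNetFirstOrder_nonneg_iff (x : EuclideanSpace ℝ (Fin n)) :
    (∀ v, 0 ≤ elasticNetFirstOrder A b μ β x v) ↔
      ∀ i y, 0 ≤ elasticNetGrad A b μ β x i * (y - x i) + μ * β * (|y| - |x i|) := by
  constructor
  · intro h i y
    have := h (EuclideanSpace.single i (y - x i))
    rwa [elasticNetFirstOrder, Finset.sum_eq_single i (fun j _ hj => by simp [hj]) (by simp),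
      PiLp.single_apply, if_pos rfl, add_sub_cancel] at this
  · intro h v
    refine Finset.sum_nonneg fun i _ => ?_
    simpa using h i (x i + v i)

theorem istaMap_eq_self_iff {α : ℝ} (hα : 0 < α) (hμβ : 0 ≤ μ * β) (x : EuclideanSpace ℝ (Fin n)) :
    istaMap m n A b μ β α x = x ↔
      ∀ i y, 0 ≤ elasticNetGrad A b μ β x i * (y - x i) + μ * β * (|y| - |x i|) := by
  rw [WithLp.ext_iff, funext_iff]
  refine forall_congr' fun i => ?_
  have hcoord : istaMap m n A b μ β α x i =
      softThreshold (α * μ * β) (x i - α * elasticNetGrad A b μ β x i) := rfl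
  rw [hcoord, softThreshold_eq_iff (by rw [mul_assoc]; positivity)]
  refine forall_congr' fun y => ?_
  have hscale : α * μ * β * (|y| - |x i|) -
        (x i - α * elasticNetGrad A b μ β x i - x i) * (y - x i) =
      α * (elasticNetGrad A b μ β x i * (y - x i) + μ * β * (|y| - |x i|)) := by ring
  rw [← sub_nonneg, hscale, mul_nonneg_iff_of_pos_left hα]

end ElasticNet

/-- For `μ > 0`, `β ∈ [0,1]`, `α > 0`, a point `x⋆` is a fixed point of the ISTA map
`f(x) = S_{αμβ}(x − α(Aᵀ(Ax − b) + μ(1−β)x))` if and only if `x⋆` is a global minimizer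
of the elastic net objective `g`. -/
theorem istaMap_fixedPoint_iff_minimizer (m n : ℕ) (A : Matrix (Fin m) (Fin n) ℝ)
    (b : EuclideanSpace ℝ (Fin m)) (μ β α : ℝ) (hμ : 0 < μ) (hβ0 : 0 ≤ β) (hβ1 : β ≤ 1)
    (hα : 0 < α) (xstar : EuclideanSpace ℝ (Fin n)) :
    istaMap m n A b μ β α xstar = xstar ↔
      ∀ x : EuclideanSpace ℝ (Fin n),
        elasticNet m n A b μ β xstar ≤ elasticNet m n A b μ β x := by
  have hμβ : 0 ≤ μ * β := by positivity
  have hμβ' : 0 ≤ μ * (1 - β) := mul_nonneg hμ.le (sub_nonneg.2 hβ1)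
  rw [istaMap_eq_self_iff A b μ β hα hμβ, ← forall_elasticNetFirstOrder_nonneg_iff]
  constructor
  · intro hfirst x
    have hx := elasticNet_add A b μ β xstar (x - xstar)
    rw [add_sub_cancel] at hx
    linarith [hfirst (x - xstar), elasticNetQuadratic_nonneg A μ β hμβ' (x - xstar)]
  · intro hmin
    refine nonneg_of_forall_nonneg_add_quadratic
      (fun v ε hε hε1 => elasticNetFirstOrder_smul_le A b μ β hμβ xstar v hε hε1)
      (elasticNetQuadratic_smul A μ β) fun v => ?_
    linarith [elasticNet_add A b μ β xstar v, hmin (xstar + v)]
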